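/- arXiv:2103.06825 — 2 statements merged into one kernel-verified Lean document; each statement's English description precedes it below -/
import Mathlib

section
/- There exists an uncountable family of minimal equicontinuous Cantor actions of the integer Heisenberg group H, each of which is topologically free and wild, such that no two distinct members of the family are return equivalent. -/
noncomputable section

open Set Topology

/-! ### The group of homeomorphisms -/

namespace Homeomorph

variable {X : Type*} [TopologicalSpace X]

instance instGroup' : Group (X ≃ₜ X) where
  mul f g := g.trans f
  one := Homeomorph.refl X
  inv := Homeomorph.symm
  mul_assoc f g h := rfl
  one_mul f := rfl
  mul_one f := rfl
  inv_mul_cancel f := Homeomorph.ext fun x => f.symm_apply_apply x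

@[simp] theorem mul_apply' (f g : X ≃ₜ X) (x : X) : (f * g) x = f (g x) := rfl
@[simp] theorem one_apply' (x : X) : (1 : X ≃ₜ X) x = x := rfl
@[simp] theorem inv_eq_symm (f : X ≃ₜ X) : f⁻¹ = f.symm := rfl

/-- The uniform topology (topology of uniform convergence, equivalently for a compact
metric space the compact-open topology) on the group of homeomorphisms of a compact
metric space, as the metric topology of the sup-metric. -/
instance instMetricSpaceHomeomorph {Y : Type*} [MetricSpace Y] [CompactSpace Y] :
    MetricSpace (Y ≃ₜ Y) :=
  MetricSpace.induced (fun h => (⟨h, h.continuous⟩ : C(Y, Y)))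
    (fun f g hfg => Homeomorph.ext fun x => congrFun (congrArg ContinuousMap.toFun hfg) x)
    inferInstance

end Homeomorph

namespace Homeomorph

variable {Y : Type*} [MetricSpace Y] [CompactSpace Y]

theorem dist_eq_contMap (f g : Y ≃ₜ Y) :
    dist f g = dist (⟨f, f.continuous⟩ : C(Y, Y)) (⟨g, g.continuous⟩ : C(Y, Y)) := rfl

theorem dist_apply_le (f g : Y ≃ₜ Y) (x : Y) : dist (f x) (g x) ≤ dist f g :=
  ContinuousMap.dist_apply_le_dist (f := (⟨f, f.continuous⟩ : C(Y, Y)))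
    (g := (⟨g, g.continuous⟩ : C(Y, Y))) x

theorem dist_lt_iff' (f g : Y ≃ₜ Y) {C : ℝ} (hC : 0 < C) :
    dist f g < C ↔ ∀ x : Y, dist (f x) (g x) < C := by
  rw [dist_eq_contMap, ContinuousMap.dist_lt_iff hC]
  rfl

instance : IsTopologicalGroup (Y ≃ₜ Y) where
  continuous_mul := by
    rw [Metric.continuous_iff]
    rintro ⟨f₀, g₀⟩ ε hε
    obtain ⟨δ₁, hδ₁, H₁⟩ := Metric.uniformContinuous_iff.mp
      (CompactSpace.uniformContinuous_of_continuous f₀.continuous) (ε / 2) (by positivity)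
    refine ⟨min δ₁ (ε / 2), by positivity, ?_⟩
    rintro ⟨f, g⟩ hd
    have hdf : dist f f₀ < ε / 2 := by
      have h' : dist f f₀ ≤ dist ((f, g)) ((f₀, g₀)) := by
        rw [Prod.dist_eq]; exact le_max_left _ _
      exact (h'.trans_lt hd).trans_le (min_le_right _ _)
    have hdg : dist g g₀ < δ₁ := by
      have h' : dist g g₀ ≤ dist ((f, g)) ((f₀, g₀)) := by
        rw [Prod.dist_eq]; exact le_max_right _ _
      exact (h'.trans_lt hd).trans_le (min_le_left _ _)
    rw [dist_lt_iff' _ _ hε]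
    intro x
    have h1 : dist (f (g x)) (f₀ (g x)) < ε / 2 :=
      lt_of_le_of_lt (dist_apply_le f f₀ (g x)) hdf
    have h2 : dist (f₀ (g x)) (f₀ (g₀ x)) < ε / 2 :=
      H₁ (lt_of_le_of_lt (dist_apply_le g g₀ x) hdg)
    calc dist ((f * g) x) ((f₀ * g₀) x) ≤ dist (f (g x)) (f₀ (g x)) + dist (f₀ (g x)) (f₀ (g₀ x)) :=
          dist_triangle _ _ _
      _ < ε / 2 + ε / 2 := by exact add_lt_add h1 h2
      _ = ε := by ring
  continuous_inv := by
    rw [Metric.continuous_iff]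
    intro f₀ ε hε
    obtain ⟨δ, hδ, H⟩ := Metric.uniformContinuous_iff.mp
      (CompactSpace.uniformContinuous_of_continuous f₀.symm.continuous) ε hε
    refine ⟨δ, hδ, ?_⟩
    intro g hdg
    rw [dist_lt_iff' _ _ hε]
    intro y
    have key : dist (g (g.symm y)) (f₀ (g.symm y)) < δ :=
      lt_of_le_of_lt (dist_apply_le g f₀ (g.symm y)) hdg
    have h2 := H key
    have h3 : dist (f₀.symm (g (g.symm y))) (f₀.symm (f₀ (g.symm y))) < ε := h2
    rw [Homeomorph.apply_symm_apply, Homeomorph.symm_apply_apply] at h3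
    rw [dist_comm] at h3
    simpa using h3
end Homeomorph

/-! ### Steinitz (supernatural) numbers -/

/-- A Steinitz number: a formal product of primes with exponents in `ℕ∞`. -/
def SteinitzNum : Type := Nat.Primes → ℕ∞

namespace SteinitzNum

/-- The Steinitz number associated to a natural number. -/
def ofNat (n : ℕ) : SteinitzNum := fun p => (n.factorization (p : ℕ) : ℕ∞)

/-- Multiplication of Steinitz numbers adds the exponents at each prime. -/
instance : Mul SteinitzNum := ⟨fun a b p => a p + b p⟩

/-- The least common multiple of a collection of positive integers, as a Steinitz number:
its exponent at `p` is the supremum of the `p`-adic valuations of the elements. -/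
def lcmSet (S : Set ℕ) : SteinitzNum := fun p => ⨆ n ∈ S, (n.factorization (p : ℕ) : ℕ∞)

/-- Two Steinitz numbers are asymptotically equivalent if they agree after multiplication
by positive integers. -/
def AsympEquiv (a b : SteinitzNum) : Prop :=
  ∃ n₀ m₀ : ℕ, 0 < n₀ ∧ 0 < m₀ ∧ ofNat n₀ * a = ofNat m₀ * b

/-- The prime spectrum of a Steinitz number: primes with nonzero exponent. -/
def primeSpectrum (a : SteinitzNum) : Set Nat.Primes := { p | a p ≠ 0 }

/-- The finite prime spectrum: primes with finite nonzero exponent. -/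
def finitePrimeSpectrum (a : SteinitzNum) : Set Nat.Primes := { p | a p ≠ 0 ∧ a p ≠ ⊤ }

/-- The infinite prime spectrum: primes with infinite exponent. -/
def infinitePrimeSpectrum (a : SteinitzNum) : Set Nat.Primes := { p | a p = ⊤ }

end SteinitzNum

/-! ### Steinitz orders for topological groups -/

/-- The Steinitz order of a topological group: the LCM of the orders of the finite
quotients `G/N` over open normal subgroups `N ⊆ G`. -/
def steinitzOrder (G : Type*) [Group G] [TopologicalSpace G] : SteinitzNum :=
  SteinitzNum.lcmSet
    { n | ∃ N : Subgroup G, N.Normal ∧ IsOpen (N : Set G) ∧ n = Nat.card (G ⧸ N) }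

/-- The Steinitz order of a subgroup `D` of a topological group `G`: the LCM of the
cardinalities `|D/(N ∩ D)|` over open normal subgroups `N ⊆ G`. -/
def steinitzOrderOfSubgroup {G : Type*} [Group G] [TopologicalSpace G] (D : Subgroup G) :
    SteinitzNum :=
  SteinitzNum.lcmSet
    { n | ∃ N : Subgroup G, N.Normal ∧ IsOpen (N : Set G) ∧
        n = Nat.card (↥D ⧸ (N.subgroupOf D)) }

/-- The relative Steinitz order of a subgroup `D` of a topological group `G`: the LCM of the
cardinalities `|G/(N · D)|` over open normal subgroups `N ⊆ G`. -/
def steinitzRelativeOrder {G : Type*} [Group G] [TopologicalSpace G] (D : Subgroup G) :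
    SteinitzNum :=
  SteinitzNum.lcmSet
    { n | ∃ N : Subgroup G, N.Normal ∧ IsOpen (N : Set G) ∧ n = Nat.card (G ⧸ (N ⊔ D)) }

/-- A profinite (compact Hausdorff totally disconnected) topological group is topologically
Noetherian if every increasing chain of closed subgroups has a maximal element. -/
def TopologicallyNoetherian (G : Type*) [Group G] [TopologicalSpace G] : Prop :=
  ∀ c : ℕ → Subgroup G, (∀ i, IsClosed (c i : Set G)) → Monotone c → ∃ i₀, ∀ i, c i ≤ c i₀

/-! ### Cantor actions -/

section CantorActions

variable {X : Type*} [MetricSpace X] {Γ : Type*} [Group Γ]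

/-- An action is minimal if every orbit is dense. -/
def IsMinimalAction (Φ : Γ →* (X ≃ₜ X)) : Prop :=
  ∀ x : X, Dense (Set.range fun g : Γ => Φ g x)

/-- An action is equicontinuous if it satisfies the uniform `ε`-`δ` condition with respect
to the metric. -/
def IsEquicontinuousAction (Φ : Γ →* (X ≃ₜ X)) : Prop :=
  ∀ ε : ℝ, 0 < ε → ∃ δ : ℝ, 0 < δ ∧
    ∀ x y : X, dist x y < δ → ∀ g : Γ, dist (Φ g x) (Φ g y) < ε

variable [CompactSpace X]

/-- `G(Φ)`: the closure of the image of `Γ` in `Homeo(X)`, in the uniform topology. -/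
def profiniteClosure (Φ : Γ →* (X ≃ₜ X)) : Subgroup (X ≃ₜ X) :=
  Φ.range.topologicalClosure

/-- The discriminant group: the isotropy subgroup of `G(Φ)` at `x`. -/
def discriminant (Φ : Γ →* (X ≃ₜ X)) (x : X) : Subgroup (profiniteClosure Φ) where
  carrier := { h | (h : X ≃ₜ X) x = x }
  one_mem' := rfl
  mul_mem' := by
    intro a b ha hb
    simp only [Set.mem_setOf_eq] at *
    show ((a : X ≃ₜ X) * (b : X ≃ₜ X)) x = x
    rw [Homeomorph.mul_apply', hb, ha]
  inv_mem' := by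
    intro a ha
    simp only [Set.mem_setOf_eq] at *
    show ((a : X ≃ₜ X)⁻¹) x = x
    rw [Homeomorph.inv_eq_symm]
    conv_lhs => rw [← ha]
    exact Homeomorph.symm_apply_apply _ _

/-- The Steinitz order `Π[G(Φ)]` of a Cantor action. -/
def steinitzOrderAction (Φ : Γ →* (X ≃ₜ X)) : SteinitzNum :=
  steinitzOrder ↥(profiniteClosure Φ)

/-- The Steinitz order `Π[D(Φ,x)]` of the discriminant of a Cantor action. -/
def steinitzOrderDisc (Φ : Γ →* (X ≃ₜ X)) (x : X) : SteinitzNum :=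
  steinitzOrderOfSubgroup (discriminant Φ x)

/-- The relative Steinitz order `Π[G(Φ) : D(Φ,x)]` of a Cantor action. -/
def steinitzOrderRel (Φ : Γ →* (X ≃ₜ X)) (x : X) : SteinitzNum :=
  steinitzRelativeOrder (discriminant Φ x)

end CantorActions

/-! ### Adapted sets, holonomy and return equivalence -/

section Adapted

variable {X : Type*} [MetricSpace X] {Γ : Type*} [Group Γ]

/-- A nonempty clopen subset `U ⊆ X` is adapted to the action `Φ` if every group element
either fixes `U` or moves it entirely off of itself. -/
def IsAdaptedSet (Φ : Γ →* (X ≃ₜ X)) (U : Set X) : Prop :=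
  U.Nonempty ∧ IsClopen U ∧ ∀ g : Γ, ((Φ g) '' U ∩ U).Nonempty → (Φ g) '' U = U

/-- The stabilizer subgroup `Γ_U` of an adapted set. -/
def adaptedStabilizer (Φ : Γ →* (X ≃ₜ X)) (U : Set X) : Subgroup Γ where
  carrier := { g | (Φ g) '' U = U }
  one_mem' := by
    show (Φ 1) '' U = U
    rw [map_one]
    exact Set.image_id U
  mul_mem' := by
    intro a b ha hb
    simp only [Set.mem_setOf_eq] at *
    rw [map_mul]
    show ((Φ a) * (Φ b)) '' U = U
    have : (((Φ a) * (Φ b) : X ≃ₜ X) : X → X) = (Φ a) ∘ (Φ b) := rfl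
    rw [this, Set.image_comp, hb, ha]
  inv_mem' := by
    intro a ha
    simp only [Set.mem_setOf_eq] at *
    rw [map_inv, Homeomorph.inv_eq_symm]
    conv_lhs => rw [← ha]
    rw [← Set.image_comp]
    simp

/-- The homeomorphism of an invariant set induced by a homeomorphism of `X`. -/
def restrictHomeo (h : X ≃ₜ X) {U : Set X} (hU : h '' U = U) : U ≃ₜ U :=
  (h.image U).trans (Homeomorph.setCongr hU)

@[simp] theorem restrictHomeo_coe (h : X ≃ₜ X) {U : Set X} (hU : h '' U = U) (x : U) :
    (restrictHomeo h hU x : X) = h x := rfl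

/-- The holonomy homomorphism of an adapted set: restriction of the stabilizer to `U`. -/
def holonomyHom (Φ : Γ →* (X ≃ₜ X)) (U : Set X) :
    adaptedStabilizer Φ U →* (↥U ≃ₜ ↥U) where
  toFun g := restrictHomeo (Φ (g : Γ)) g.2
  map_one' := by
    ext x
    show ((restrictHomeo (Φ ((1 : adaptedStabilizer Φ U) : Γ)) _ x : X) = _)
    simp
  map_mul' := by
    intro a b
    ext x
    show ((restrictHomeo (Φ ((a * b : adaptedStabilizer Φ U) : Γ)) _ x : X) = _)
    simp only [restrictHomeo_coe, Subgroup.coe_mul, map_mul]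
    rfl

/-- The holonomy group `H_U` of an adapted set: the image of the stabilizer in `Homeo(U)`. -/
def holonomyGroup (Φ : Γ →* (X ≃ₜ X)) (U : Set X) : Subgroup (↥U ≃ₜ ↥U) :=
  (holonomyHom Φ U).range

end Adapted

/-- Two Cantor actions are return equivalent if they admit adapted sets whose holonomy
actions are isomorphic, via a homeomorphism between the adapted sets together with a
compatible isomorphism of the holonomy groups. -/
def ReturnEquivalent
    {X₁ : Type*} [MetricSpace X₁] {Γ₁ : Type*} [Group Γ₁]
    {X₂ : Type*} [MetricSpace X₂] {Γ₂ : Type*} [Group Γ₂]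
    (Φ₁ : Γ₁ →* (X₁ ≃ₜ X₁)) (Φ₂ : Γ₂ →* (X₂ ≃ₜ X₂)) : Prop :=
  ∃ (U₁ : Set X₁) (U₂ : Set X₂), IsAdaptedSet Φ₁ U₁ ∧ IsAdaptedSet Φ₂ U₂ ∧
    ∃ (h : ↥U₁ ≃ₜ ↥U₂) (θ : holonomyGroup Φ₁ U₁ ≃* holonomyGroup Φ₂ U₂),
      ∀ k : holonomyGroup Φ₁ U₁,
        ((θ k : ↥U₂ ≃ₜ ↥U₂)) = h.symm.trans (((k : ↥U₁ ≃ₜ ↥U₁)).trans h)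

section Regularity

variable {X : Type*} [MetricSpace X]

/-- An action of a group `H` on `X` through a homomorphism `ρ : H →* Homeo(X)` is locally
quasi-analytic if there is `ε > 0` so that for every nonempty open `U` of diameter less
than `ε`, any element acting as the identity on a nonempty open subset `V ⊆ U` with
`ρ g (V) = V` acts as the identity on all of `U`. -/
def IsLocallyQuasiAnalytic {H : Type*} [Group H] (ρ : H →* (X ≃ₜ X)) : Prop :=
  ∃ ε : ℝ, 0 < ε ∧ ∀ U : Set X, IsOpen U → U.Nonempty → Metric.diam U < ε →
    ∀ V : Set X, V ⊆ U → IsOpen V → V.Nonempty →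
      ∀ g : H, (ρ g) '' V = V → (∀ x ∈ V, ρ g x = x) → ∀ x ∈ U, ρ g x = x

variable [CompactSpace X] {Γ : Type*} [Group Γ]

/-- A Cantor action is stable if the induced action of `G(Φ)` on `X` is locally
quasi-analytic; otherwise it is wild. -/
def IsStableAction (Φ : Γ →* (X ≃ₜ X)) : Prop :=
  IsLocallyQuasiAnalytic (profiniteClosure Φ).subtype

/-- An action is topologically free if the set of points fixed by some nontrivial group
element is meagre. -/
def IsTopologicallyFree (Φ : Γ →* (X ≃ₜ X)) : Prop :=
  IsMeagre { x : X | ∃ g : Γ, g ≠ 1 ∧ Φ g x = x }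

end Regularity

/-! ### The integer Heisenberg group -/

/-- The integer Heisenberg group: `ℤ³` with the multiplication
`(a,b,c)·(a',b',c') = (a+a', b+b', c+c'+ab')`. -/
@[ext] structure Heisenberg where
  a : ℤ
  b : ℤ
  c : ℤ

namespace Heisenberg

instance : Mul Heisenberg :=
  ⟨fun x y => ⟨x.a + y.a, x.b + y.b, x.c + y.c + x.a * y.b⟩⟩

instance : One Heisenberg := ⟨⟨0, 0, 0⟩⟩

instance : Inv Heisenberg := ⟨fun x => ⟨-x.a, -x.b, -x.c + x.a * x.b⟩⟩

@[simp] theorem mul_a (x y : Heisenberg) : (x * y).a = x.a + y.a := rfl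
@[simp] theorem mul_b (x y : Heisenberg) : (x * y).b = x.b + y.b := rfl
@[simp] theorem mul_c (x y : Heisenberg) : (x * y).c = x.c + y.c + x.a * y.b := rfl
@[simp] theorem one_a : (1 : Heisenberg).a = 0 := rfl
@[simp] theorem one_b : (1 : Heisenberg).b = 0 := rfl
@[simp] theorem one_c : (1 : Heisenberg).c = 0 := rfl
@[simp] theorem inv_a (x : Heisenberg) : x⁻¹.a = -x.a := rfl
@[simp] theorem inv_b (x : Heisenberg) : x⁻¹.b = -x.b := rfl
@[simp] theorem inv_c (x : Heisenberg) : x⁻¹.c = -x.c + x.a * x.b := rfl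

instance : Group Heisenberg where
  mul := (· * ·)
  one := 1
  inv := (·⁻¹)
  mul_assoc x y z := by ext <;> simp <;> ring
  one_mul x := by ext <;> simp
  mul_one x := by ext <;> simp
  inv_mul_cancel x := by ext <;> simp

instance : Countable Heisenberg :=
  Function.Injective.countable (f := fun x : Heisenberg => (x.a, x.b, x.c))
    (by
      intro x y h
      injection h with h1 h2
      injection h2 with h3 h4
      ext <;> assumption)

end Heisenberg

/-- A minimal equicontinuous Cantor action of the integer Heisenberg group, bundled with
its Cantor space. -/
structure HeisenbergCantorAction where
  /-- the Cantor space -/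
  X : Type
  [ms : MetricSpace X]
  [cs : CompactSpace X]
  [ne : Nonempty X]
  [td : TotallyDisconnectedSpace X]
  perf : Perfect (Set.univ : Set X)
  /-- the action of the Heisenberg group by homeomorphisms -/
  act : Heisenberg →* (X ≃ₜ X)
  minimal : IsMinimalAction act
  equicontinuous : IsEquicontinuousAction act

attribute [instance] HeisenbergCantorAction.ms HeisenbergCantorAction.cs
  HeisenbergCantorAction.ne HeisenbergCantorAction.td


/-!
For a sequence `g` of distinct primes, let `X_g = ∏ₙ Heis(ℤ/gₙ) ⧸ {(t, 0, 0)}`, on which the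
integer Heisenberg group acts diagonally through its reductions modulo the `gₙ`. By the Chinese
remainder theorem the image of `Heisenberg` is dense in `∏ₙ Heis(ℤ/gₙ)`. This gives minimality,
and it puts into `G(Φ)` every translation acting in one coordinate alone. Translation by
`(1, 0, 0)` fixes the base coset but not every coset, so such a translation fixes a small cylinder
and moves points of a larger one: the action is wild. A nontrivial element of `Heisenberg`
survives reduction modulo all large primes, so it has a nowhere dense fixed set. For an adapted
set, the closure of the holonomy group contains elements of order `gₙ` for all large `n`, and the
only primes that occur as orders of its elements are the `gₙ`. Return equivalence conjugates
these closures, so if two actions are return equivalent, all but finitely many terms of one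
sequence occur in the other. Coding the initial segments of each `r : ℕ → Bool` by primes gives
continuum many sequences, and no two of them are related in this way.
-/

theorem exists_pow_half_lt {ε : ℝ} (hε : 0 < ε) : ∃ N : ℕ, (1 / 2 : ℝ) ^ N < ε :=
  exists_pow_lt_of_lt_one hε (by norm_num)

theorem smul_eq_of_pow_smul_eq {G α : Type*} [Group G] [Finite G] [MulAction G α] {a : G}
    {x : α} {q : ℕ} (hq : q.Coprime (Nat.card G)) (h : a ^ q • x = x) : a • x = x := by
  obtain ⟨m, hm⟩ := exists_pow_eq_self_of_coprime (hq.coprime_dvd_right (orderOf_dvd_natCard a))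
  rw [← hm]
  exact (MulAction.stabilizer G x).pow_mem h m

namespace Homeomorph

def smulHom (G α : Type*) [Group G] [TopologicalSpace α] [MulAction G α]
    [ContinuousConstSMul G α] : G →* (α ≃ₜ α) where
  toFun := Homeomorph.smul
  map_one' := Homeomorph.ext (one_smul G)
  map_mul' a b := Homeomorph.ext (mul_smul a b)

section Conj

variable {Z₁ Z₂ : Type*} [TopologicalSpace Z₁] [TopologicalSpace Z₂]

def conjHom (h : Z₁ ≃ₜ Z₂) : (Z₁ ≃ₜ Z₁) →* (Z₂ ≃ₜ Z₂) where
  toFun k := h.symm.trans (k.trans h)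
  map_one' := Homeomorph.ext fun x => h.apply_symm_apply x
  map_mul' k₁ k₂ := Homeomorph.ext fun x => by simp

theorem conjHom_apply (h : Z₁ ≃ₜ Z₂) (k : Z₁ ≃ₜ Z₁) (x : Z₂) :
    conjHom h k x = h (k (h.symm x)) := rfl

theorem conjHom_symm_conjHom (h : Z₁ ≃ₜ Z₂) (k : Z₁ ≃ₜ Z₁) :
    conjHom h.symm (conjHom h k) = k :=
  Homeomorph.ext fun x => by simp [conjHom_apply]

theorem conjHom_injective (h : Z₁ ≃ₜ Z₂) : Function.Injective (conjHom h) :=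
  Function.LeftInverse.injective (conjHom_symm_conjHom h)

end Conj

variable {Z Z₁ Z₂ : Type*} [MetricSpace Z] [CompactSpace Z]
  [MetricSpace Z₁] [CompactSpace Z₁] [MetricSpace Z₂] [CompactSpace Z₂]

theorem dist_le_of_forall {f f' : Z ≃ₜ Z} {C : ℝ} (hC : 0 ≤ C)
    (h : ∀ x, dist (f x) (f' x) ≤ C) : dist f f' ≤ C := by
  rw [dist_eq_contMap, ContinuousMap.dist_le hC]
  exact h

theorem continuous_eval_const (x : Z) : Continuous fun f : Z ≃ₜ Z => f x :=
  (LipschitzWith.of_dist_le_mul (K := 1) fun f f' => by simpa using dist_apply_le f f' x).continuous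

theorem continuous_conjHom (h : Z₁ ≃ₜ Z₂) : Continuous (conjHom h) := by
  refine Metric.continuous_iff.mpr fun k₀ ε hε => ?_
  obtain ⟨δ, hδ, H⟩ := Metric.uniformContinuous_iff.mp
    (CompactSpace.uniformContinuous_of_continuous h.continuous) ε hε
  refine ⟨δ, hδ, fun k hk => (dist_lt_iff' _ _ hε).mpr fun y => H ?_⟩
  exact (dist_apply_le k k₀ (h.symm y)).trans_lt hk

end Homeomorph

open Homeomorph

section Holonomy

variable {X : Type*} [MetricSpace X] {U : Set X}

theorem restrictHomeo_pow_apply (h : X ≃ₜ X) (hU : h '' U = U) (n : ℕ) (x : U) :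
    ((restrictHomeo h hU ^ n) x : X) = (h ^ n) x := by
  induction n generalizing x with
  | zero => rfl
  | succ n ih => exact ih (restrictHomeo h hU x)

variable {Z Z₁ Z₂ : Type*} [MetricSpace Z] [CompactSpace Z]
  [MetricSpace Z₁] [CompactSpace Z₁] [MetricSpace Z₂] [CompactSpace Z₂]

def closureOrders (S : Set (Z ≃ₜ Z)) : Set ℕ := orderOf '' closure S

theorem closureOrders_mono {S T : Set (Z ≃ₜ Z)} (h : S ⊆ T) :
    closureOrders S ⊆ closureOrders T :=
  Set.image_mono (closure_mono h)

theorem closureOrders_subset_image_conjHom (h : Z₁ ≃ₜ Z₂) (S : Set (Z₁ ≃ₜ Z₁)) :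
    closureOrders S ⊆ closureOrders (conjHom h '' S) := by
  rintro _ ⟨k, hk, rfl⟩
  exact ⟨conjHom h k, image_closure_subset_closure_image (continuous_conjHom h) ⟨k, hk, rfl⟩,
    orderOf_injective _ (conjHom_injective h) k⟩

variable {X₁ X₂ Γ₁ Γ₂ : Type*} [MetricSpace X₁] [MetricSpace X₂] [Group Γ₁] [Group Γ₂]

theorem ReturnEquivalent.refl [Nonempty X₁] (Φ : Γ₁ →* (X₁ ≃ₜ X₁)) : ReturnEquivalent Φ Φ := by
  have hU : IsAdaptedSet Φ Set.univ :=
    ⟨Set.univ_nonempty, isClopen_univ, fun g _ => by rw [Set.image_univ, (Φ g).range_coe]⟩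
  exact ⟨_, _, hU, hU, Homeomorph.refl _, MulEquiv.refl _, fun _ => rfl⟩

theorem ReturnEquivalent.exists_closureOrders_subset {Φ₁ : Γ₁ →* (X₁ ≃ₜ X₁)}
    {Φ₂ : Γ₂ →* (X₂ ≃ₜ X₂)} (hre : ReturnEquivalent Φ₁ Φ₂) :
    ∃ U₁ U₂, IsAdaptedSet Φ₁ U₁ ∧ IsAdaptedSet Φ₂ U₂ ∧ ∀ [CompactSpace U₁] [CompactSpace U₂],
      closureOrders (holonomyGroup Φ₂ U₂ : Set (U₂ ≃ₜ U₂)) ⊆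
        closureOrders (holonomyGroup Φ₁ U₁ : Set (U₁ ≃ₜ U₁)) := by
  obtain ⟨U₁, U₂, hU₁, hU₂, h, θ, hθ⟩ := hre
  refine ⟨U₁, U₂, hU₁, hU₂, fun [_] [_] => ?_⟩
  refine (closureOrders_subset_image_conjHom h.symm _).trans (closureOrders_mono ?_)
  rintro _ ⟨k, hk, rfl⟩
  obtain ⟨c, hc⟩ := θ.surjective ⟨k, hk⟩
  replace hc : k = conjHom h c := (congrArg Subtype.val hc).symm.trans (hθ c)
  rw [hc, conjHom_symm_conjHom]
  exact c.2

end Holonomy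

@[ext] structure Heis (R : Type*) [CommRing R] where
  a : R
  b : R
  c : R

namespace Heis

variable {R : Type*} [CommRing R]

instance : Mul (Heis R) := ⟨fun x y => ⟨x.a + y.a, x.b + y.b, x.c + y.c + x.a * y.b⟩⟩
instance : One (Heis R) := ⟨⟨0, 0, 0⟩⟩
instance : Inv (Heis R) := ⟨fun x => ⟨-x.a, -x.b, -x.c + x.a * x.b⟩⟩

@[simp] theorem mul_a (x y : Heis R) : (x * y).a = x.a + y.a := rfl
@[simp] theorem mul_b (x y : Heis R) : (x * y).b = x.b + y.b := rfl
@[simp] theorem mul_c (x y : Heis R) : (x * y).c = x.c + y.c + x.a * y.b := rfl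
@[simp] theorem one_a : (1 : Heis R).a = 0 := rfl
@[simp] theorem one_b : (1 : Heis R).b = 0 := rfl
@[simp] theorem one_c : (1 : Heis R).c = 0 := rfl
@[simp] theorem inv_a (x : Heis R) : x⁻¹.a = -x.a := rfl
@[simp] theorem inv_b (x : Heis R) : x⁻¹.b = -x.b := rfl
@[simp] theorem inv_c (x : Heis R) : x⁻¹.c = -x.c + x.a * x.b := rfl

instance : Group (Heis R) where
  mul_assoc x y z := by ext <;> simp <;> ring
  one_mul x := by ext <;> simp
  mul_one x := by ext <;> simp
  inv_mul_cancel x := by ext <;> simp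

def equivProd : Heis R ≃ R × R × R where
  toFun x := (x.a, x.b, x.c)
  invFun p := ⟨p.1, p.2.1, p.2.2⟩

instance [Finite R] : Finite (Heis R) := .of_equiv _ equivProd.symm

theorem natCard_eq : Nat.card (Heis R) = Nat.card R ^ 3 := by
  rw [Nat.card_congr equivProd, Nat.card_prod, Nat.card_prod]
  ring

def e₁ : Heis R := ⟨1, 0, 0⟩

def e₂ : Heis R := ⟨0, 1, 0⟩

theorem e₁_pow (n : ℕ) : (e₁ : Heis R) ^ n = ⟨n, 0, 0⟩ := by
  induction n with
  | zero => ext <;> simp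
  | succ n ih => rw [pow_succ, ih]; ext <;> simp [e₁]

theorem orderOf_e₁ (p : ℕ) [Fact p.Prime] : orderOf (e₁ : Heis (ZMod p)) = p :=
  orderOf_eq_prime (by rw [e₁_pow, ZMod.natCast_self]; rfl)
    fun h => one_ne_zero (congrArg Heis.a h)

def horizontal (R : Type*) [CommRing R] : Subgroup (Heis R) where
  carrier := {x | x.b = 0 ∧ x.c = 0}
  one_mem' := ⟨rfl, rfl⟩
  mul_mem' := by rintro x y ⟨hb, hc⟩ ⟨hb', hc'⟩; simp [hb, hc, hb', hc']
  inv_mem' := by rintro x ⟨hb, hc⟩; simp [hb, hc]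

theorem mem_horizontal {x : Heis R} : x ∈ horizontal R ↔ x.b = 0 ∧ x.c = 0 := Iff.rfl

def Cosets (R : Type*) [CommRing R] : Type _ := Heis R ⧸ horizontal R

namespace Cosets

instance : MulAction (Heis R) (Cosets R) :=
  inferInstanceAs (MulAction (Heis R) (Heis R ⧸ horizontal R))
instance : MulAction.IsPretransitive (Heis R) (Cosets R) :=
  inferInstanceAs (MulAction.IsPretransitive (Heis R) (Heis R ⧸ horizontal R))
instance [Finite R] : Finite (Cosets R) := Quotient.finite _
instance : UniformSpace (Cosets R) := ⊥
instance : DiscreteTopology (Cosets R) := discreteTopology_of_discrete_uniformity rfl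

def mk (x : Heis R) : Cosets R := QuotientGroup.mk x

@[simp] theorem smul_mk (g x : Heis R) : g • mk x = mk (g * x) := rfl

theorem smul_mk_eq_iff {g x : Heis R} : g • mk x = mk x ↔ x⁻¹ * g * x ∈ horizontal R := by
  change (QuotientGroup.mk (g * x) : Heis R ⧸ horizontal R) = QuotientGroup.mk x ↔ _
  rw [QuotientGroup.eq, ← inv_mem_iff]
  simp only [mul_inv_rev, inv_inv, mul_assoc]

theorem exists_smul_ne {g : Heis R} (hg : g ≠ 1) : ∃ y : Cosets R, g • y ≠ y := by
  by_cases hbc : g.b = 0 ∧ g.c = 0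
  · refine ⟨mk e₂, fun h => hg ?_⟩
    have := (mem_horizontal.mp (smul_mk_eq_iff.mp h)).2
    ext <;> simp_all [e₂]
  · exact ⟨mk 1, by rw [Ne, smul_mk_eq_iff]; simpa [mem_horizontal] using hbc⟩

theorem e₁_smul_mk_one : (e₁ : Heis R) • mk 1 = mk (1 : Heis R) :=
  smul_mk_eq_iff.mpr (by simp [e₁, mem_horizontal])

theorem e₁_smul_mk_e₂_ne [Nontrivial R] : (e₁ : Heis R) • mk e₂ ≠ mk (e₂ : Heis R) := by
  rw [Ne, smul_mk_eq_iff, mem_horizontal]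
  simp [e₁, e₂]

instance [Nontrivial R] : Nontrivial (Cosets R) :=
  ⟨⟨_, _, e₁_smul_mk_e₂_ne⟩⟩

end Cosets

end Heis

namespace Heisenberg

def reduce (R : Type*) [CommRing R] : Heisenberg →* Heis R where
  toFun γ := ⟨γ.a, γ.b, γ.c⟩
  map_one' := by ext <;> simp
  map_mul' x y := by ext <;> simp

theorem eq_one_of_reduce_eq_one {p : ℕ} {γ : Heisenberg} (h : reduce (ZMod p) γ = 1)
    (ha : |γ.a| < p) (hb : |γ.b| < p) (hc : |γ.c| < p) : γ = 1 := by
  have key : ∀ z : ℤ, (z : ZMod p) = 0 → |z| < p → z = 0 := fun z hz hzp =>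
    Int.eq_zero_of_abs_lt_dvd ((ZMod.intCast_zmod_eq_zero_iff_dvd z p).mp hz) hzp
  ext
  · exact key _ (congrArg Heis.a h) ha
  · exact key _ (congrArg Heis.b h) hb
  · exact key _ (congrArg Heis.c h) hc

end Heisenberg

namespace HeisOdometer

open Heis Heisenberg PiNat Filter

class PrimeSeq (g : ℕ → ℕ) : Prop where
  prime : ∀ n, (g n).Prime

instance {g : ℕ → ℕ} [PrimeSeq g] (n : ℕ) : Fact (g n).Prime := ⟨PrimeSeq.prime n⟩

variable (g : ℕ → ℕ)

/-- `PiNat` puts on this product the metric `dist x y = (1 / 2) ^ n`, where `n` is the first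
coordinate in which `x` and `y` differ. -/
abbrev Space : Type := ∀ n, Cosets (ZMod (g n))

abbrev Translations : Type := ∀ n, Heis (ZMod (g n))

instance : MetricSpace (Space g) :=
  PiNat.metricSpaceOfDiscreteUniformity fun _ => rfl

instance : TotallyDisconnectedSpace (Space g) :=
  inferInstanceAs (TotallyDisconnectedSpace (∀ n, Cosets (ZMod (g n))))

instance [PrimeSeq g] : CompactSpace (Space g) :=
  inferInstanceAs (CompactSpace (∀ n, Cosets (ZMod (g n))))

instance : Nonempty (Space g) := ⟨fun _ => Cosets.mk 1⟩

variable {g}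

theorem mem_cylinder_iff_dist_le {x y : Space g} {n : ℕ} :
    y ∈ cylinder x n ↔ dist y x ≤ (1 / 2) ^ n :=
  PiNat.mem_cylinder_iff_dist_le

theorem apply_eq_of_dist_lt {x y : Space g} {n i : ℕ} (h : dist x y < (1 / 2) ^ n) (hi : i ≤ n) :
    x i = y i :=
  PiNat.apply_eq_of_dist_lt h hi

theorem eventually_cylinder_subset {x : Space g} {U : Set (Space g)} (hU : U ∈ 𝓝 x) :
    ∀ᶠ n in atTop, cylinder x n ⊆ U := by
  obtain ⟨ε, hε, hball⟩ := Metric.mem_nhds_iff.mp hU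
  filter_upwards [(tendsto_pow_atTop_nhds_zero_of_lt_one (r := (1 / 2 : ℝ)) (by norm_num)
    (by norm_num)).eventually (gt_mem_nhds hε)] with n hn
  exact fun y hy => hball ((mem_cylinder_iff_dist_le.mp hy).trans_lt hn)

theorem diam_cylinder_le (x : Space g) (n : ℕ) : Metric.diam (cylinder x n) ≤ (1 / 2) ^ n :=
  Metric.diam_le_of_forall_dist_le (by positivity) fun _ hy _ hz =>
    mem_cylinder_iff_dist_le.mp fun i hi => (hy i hi).trans (hz i hi).symm

instance [PrimeSeq g] : PerfectSpace (Space g) := by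
  refine ⟨preperfect_iff_nhds.mpr fun x _ U hU => ?_⟩
  obtain ⟨n, hn⟩ := (eventually_cylinder_subset hU).exists
  obtain ⟨y, hy⟩ := exists_ne (x n)
  exact ⟨Function.update x n y, ⟨hn (update_mem_cylinder x n y), trivial⟩,
    fun h => hy (by simpa using congrFun h n)⟩

theorem smul_mem_cylinder {h h' : Translations g} {N : ℕ} (H : ∀ n < N, h n = h' n)
    (x : Space g) : h • x ∈ cylinder (h' • x) N :=
  fun n hn => by simp only [Pi.smul_apply', H n hn]

theorem dist_smul_smul_le (h : Translations g) (x y : Space g) :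
    dist (h • x) (h • y) ≤ dist x y := by
  rcases eq_or_ne x y with rfl | hne
  · simp
  rw [PiNat.dist_eq_of_ne hne]
  refine mem_cylinder_iff_dist_le.mp fun i hi => ?_
  simp only [Pi.smul_apply', apply_eq_of_lt_firstDiff hi]

instance : IsIsometricSMul (Translations g) (Space g) :=
  ⟨fun h => Isometry.of_dist_eq fun x y => (dist_smul_smul_le h x y).antisymm <| by
    simpa using dist_smul_smul_le h⁻¹ (h • x) (h • y)⟩

variable (g) in
def reduceAll : Heisenberg →* Translations g := MonoidHom.pi fun n => reduce (ZMod (g n))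

variable (g) in
def action : Heisenberg →* (Space g ≃ₜ Space g) := (smulHom _ _).comp (reduceAll g)

theorem action_apply (γ : Heisenberg) (x : Space g) : action g γ x = reduceAll g γ • x := rfl

theorem isEquicontinuousAction_action : IsEquicontinuousAction (action g) :=
  fun ε hε => ⟨ε, hε, fun x y hxy γ => by simpa only [action_apply, dist_smul] using hxy⟩

variable (g) in
def e₁At (n : ℕ) : Translations g := Pi.mulSingle n e₁

theorem e₁At_smul_of_apply_eq {x : Space g} {n : ℕ} (hx : x n = Cosets.mk 1) :
    e₁At g n • x = x := by
  ext i
  rcases eq_or_ne i n with rfl | hi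
  · rw [e₁At, Pi.smul_apply', Pi.mulSingle_eq_same, hx]
    exact Cosets.e₁_smul_mk_one
  · simp [e₁At, hi]

theorem interior_setOf_smul_eq_eq_empty {h : Translations g} (H : ∀ N, ∃ n ≥ N, h n ≠ 1) :
    interior {x : Space g | h • x = x} = ∅ := by
  refine Set.eq_empty_of_forall_notMem fun x hx => ?_
  obtain ⟨N, hN⟩ :=
    eventually_atTop.mp (eventually_cylinder_subset (mem_interior_iff_mem_nhds.mp hx))
  obtain ⟨n, hn, hne⟩ := H N
  obtain ⟨y, hy⟩ := Cosets.exists_smul_ne hne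
  have hfix : h • Function.update x n y = Function.update x n y :=
    hN n hn (update_mem_cylinder x n y)
  exact hy (by simpa using congrFun hfix n)

theorem exists_reduce_ne_one (hg : Function.Injective g) {γ : Heisenberg} (hγ : γ ≠ 1) (N : ℕ) :
    ∃ n ≥ N, reduce (ZMod (g n)) γ ≠ 1 := by
  obtain ⟨n, hn, hgn⟩ := ((eventually_ge_atTop N).and (hg.nat_tendsto_atTop.eventually_gt_atTop
    (max |γ.a| (max |γ.b| |γ.c|)).toNat)).exists
  refine ⟨n, hn, fun h1 => hγ (eq_one_of_reduce_eq_one h1 ?_ ?_ ?_)⟩ <;> omega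

theorem isTopologicallyFree_action (hg : Function.Injective g) :
    IsTopologicallyFree (action g) := by
  have hfix : {x : Space g | ∃ γ : Heisenberg, γ ≠ 1 ∧ action g γ x = x} =
      ⋃ γ : {γ : Heisenberg // γ ≠ 1}, {x | reduceAll g γ • x = x} := by
    ext x
    simp [action_apply]
  rw [IsTopologicallyFree, hfix]
  refine isMeagre_iUnion fun γ => IsNowhereDense.isMeagre ?_
  refine (isClosed_eq (continuous_const_smul _) continuous_id).isNowhereDense_iff.mpr ?_
  exact interior_setOf_smul_eq_eq_empty (exists_reduce_ne_one hg γ.2)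

section

variable {U : Set (Space g)} {N : ℕ}

theorem smul_mem_of_cylinder_subset (hU : ∀ x ∈ U, cylinder x N ⊆ U) {h : Translations g}
    (H : ∀ n < N, h n = 1) {x : Space g} (hx : x ∈ U) : h • x ∈ U :=
  hU x hx (by simpa using smul_mem_cylinder H x)

theorem smulHom_image_eq (hU : ∀ x ∈ U, cylinder x N ⊆ U) {h : Translations g}
    (H : ∀ n < N, h n = 1) : smulHom _ (Space g) h '' U = U := by
  refine (Set.image_subset_iff.mpr fun x => smul_mem_of_cylinder_subset hU H).antisymm
    fun x hx => ⟨h⁻¹ • x, smul_mem_of_cylinder_subset hU (fun n hn => ?_) hx, smul_inv_smul h x⟩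
  simp [H n hn]

theorem exists_apply_eq_smul [CompactSpace U] {k : U ≃ₜ U}
    (hk : k ∈ closure (holonomyGroup (action g) U : Set (U ≃ₜ U))) (n : ℕ) :
    ∃ a : Heis (ZMod (g n)), ∀ x : U, (k x : Space g) n = a • (x : Space g) n := by
  obtain ⟨_, ⟨⟨γ, hγ⟩, rfl⟩, hdist⟩ :=
    Metric.mem_closure_iff.mp hk ((1 / 2) ^ n) (by positivity)
  exact ⟨reduce _ γ, fun x => (apply_eq_of_dist_lt ((dist_apply_le _ _ x).trans_lt hdist) le_rfl :
    (k x : Space g) n = action g γ x n)⟩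

end

variable [PrimeSeq g]

theorem e₁At_smul_update_ne (x : Space g) (n : ℕ) :
    e₁At g n • Function.update x n (Cosets.mk e₂) ≠ Function.update x n (Cosets.mk e₂) :=
  fun h => Cosets.e₁_smul_mk_e₂_ne (by simpa [e₁At] using congrFun h n)

theorem orderOf_e₁At (n : ℕ) : orderOf (e₁At g n) = g n := by
  rw [e₁At, orderOf_piMulSingle, orderOf_e₁]

theorem dist_smulHom_le {h h' : Translations g} {N : ℕ} (H : ∀ n < N, h n = h' n) :
    dist (smulHom _ (Space g) h) (smulHom _ _ h') ≤ (1 / 2) ^ N :=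
  dist_le_of_forall (by positivity) fun x => mem_cylinder_iff_dist_le.mp (smul_mem_cylinder H x)

theorem exists_intCast_eq (hg : Function.Injective g) (N : ℕ) (t : ∀ n, ZMod (g n)) :
    ∃ z : ℤ, ∀ n < N, (z : ZMod (g n)) = t n := by
  have hcop : Pairwise fun i j : Fin N => (g i).Coprime (g j) := fun i j hij =>
    (Nat.coprime_primes (PrimeSeq.prime _) (PrimeSeq.prime _)).mpr
      (hg.ne (Fin.val_injective.ne hij))
  let e := ZMod.prodEquivPi _ hcop
  have : NeZero (∏ i : Fin N, g i) := ⟨Finset.prod_ne_zero_iff.mpr fun i _ => NeZero.ne _⟩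
  refine ⟨(e.symm fun i => t i).val, fun n hn => ?_⟩
  have := congrFun (e.apply_symm_apply fun i => t i) ⟨n, hn⟩
  rw [ZMod.prodEquivPi_apply, ZMod.castHom_apply] at this
  rw [← this, Int.cast_natCast, ZMod.natCast_val]

theorem exists_reduceAll_eq (hg : Function.Injective g) (N : ℕ) (h : Translations g) :
    ∃ γ : Heisenberg, ∀ n < N, reduceAll g γ n = h n := by
  obtain ⟨a, ha⟩ := exists_intCast_eq hg N fun n => (h n).a
  obtain ⟨b, hb⟩ := exists_intCast_eq hg N fun n => (h n).b
  obtain ⟨c, hc⟩ := exists_intCast_eq hg N fun n => (h n).c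
  exact ⟨⟨a, b, c⟩, fun n hn => Heis.ext (ha n hn) (hb n hn) (hc n hn)⟩

theorem smulHom_mem_closure_range_action (hg : Function.Injective g) (h : Translations g) :
    smulHom _ _ h ∈ closure (Set.range (action g)) := by
  refine Metric.mem_closure_iff.mpr fun ε hε => ?_
  obtain ⟨N, hN⟩ := exists_pow_half_lt hε
  obtain ⟨γ, hγ⟩ := exists_reduceAll_eq hg N h
  exact ⟨action g γ, ⟨γ, rfl⟩, by rw [dist_comm]; exact (dist_smulHom_le hγ).trans_lt hN⟩

theorem isMinimalAction_action (hg : Function.Injective g) : IsMinimalAction (action g) := by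
  intro x
  refine dense_iff_closure_eq.mpr (Set.eq_univ_of_forall fun y => ?_)
  choose h hh using fun n => MulAction.exists_smul_eq (Heis (ZMod (g n))) (x n) (y n)
  obtain rfl : (h : Translations g) • x = y := funext hh
  have := image_closure_subset_closure_image (continuous_eval_const x)
    ⟨_, smulHom_mem_closure_range_action hg h, rfl⟩
  rwa [← Set.range_comp] at this

theorem smulHom_mem_profiniteClosure (hg : Function.Injective g) (h : Translations g) :
    smulHom _ _ h ∈ profiniteClosure (action g) := by
  rw [profiniteClosure, ← SetLike.mem_coe, Subgroup.topologicalClosure_coe, MonoidHom.coe_range]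
  exact smulHom_mem_closure_range_action hg h

/-- The translation `e₁At g N` lies in `G(Φ)` and fixes the cylinder of depth `N + 1` about the
base point, but moves points of the cylinder of depth `N`. -/
theorem not_isStableAction_action (hg : Function.Injective g) : ¬ IsStableAction (action g) := by
  rintro ⟨ε, hε, H⟩
  obtain ⟨N, hN⟩ := exists_pow_half_lt hε
  let x₀ : Space g := fun _ => Cosets.mk 1
  let σ : profiniteClosure (action g) := ⟨_, smulHom_mem_profiniteClosure hg (e₁At g N)⟩
  let V := cylinder x₀ (N + 1)
  have hV : ∀ x ∈ V, (σ : Space g ≃ₜ Space g) x = x :=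
    fun x hx => e₁At_smul_of_apply_eq (hx N N.lt_succ_self)
  have hσU := H _ (isOpen_cylinder _ x₀ N) ⟨x₀, self_mem_cylinder _ _⟩
    ((diam_cylinder_le _ _).trans_lt hN) V (cylinder_anti _ N.le_succ) (isOpen_cylinder _ _ _)
    ⟨x₀, self_mem_cylinder _ _⟩ σ ((Set.image_congr hV).trans (Set.image_id V)) hV
  exact e₁At_smul_update_ne x₀ N (hσU _ (update_mem_cylinder x₀ N _))

section

variable {U : Set (Space g)} {N : ℕ}

theorem exists_cylinder_subset_of_isClopen (hU : IsClopen U) :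
    ∃ N, ∀ x ∈ U, cylinder x N ⊆ U := by
  obtain ⟨δ, hδ, hδU⟩ := hU.isClosed.isCompact.exists_thickening_subset_open hU.isOpen subset_rfl
  obtain ⟨N, hN⟩ := exists_pow_half_lt hδ
  exact ⟨N, fun x hx y hy => hδU (Metric.mem_thickening_iff.mpr
    ⟨x, hx, (mem_cylinder_iff_dist_le.mp hy).trans_lt hN⟩)⟩

theorem restrictHomeo_smulHom_mem_closure (hg : Function.Injective g) [CompactSpace U]
    (hU : ∀ x ∈ U, cylinder x N ⊆ U) {h : Translations g} (H : ∀ n < N, h n = 1) :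
    restrictHomeo _ (smulHom_image_eq hU H) ∈
      closure (holonomyGroup (action g) U : Set (U ≃ₜ U)) := by
  refine Metric.mem_closure_iff.mpr fun ε hε => ?_
  obtain ⟨K, hK⟩ := exists_pow_half_lt hε
  obtain ⟨γ, hγ⟩ := exists_reduceAll_eq hg (max K N) h
  have hγU : γ ∈ adaptedStabilizer (action g) U :=
    smulHom_image_eq hU fun n hn => (hγ n (lt_max_of_lt_right hn)).trans (H n hn)
  refine ⟨_, ⟨⟨γ, hγU⟩, rfl⟩, lt_of_le_of_lt ?_ hK⟩
  refine dist_le_of_forall (by positivity) fun x => ?_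
  rw [Subtype.dist_eq, dist_comm]
  refine (mem_cylinder_iff_dist_le.mp (smul_mem_cylinder hγ x)).trans ?_
  exact pow_le_pow_of_le_one (by norm_num) (by norm_num) (le_max_left K N)

theorem mem_closureOrders_holonomyGroup (hg : Function.Injective g) [CompactSpace U]
    (hU : ∀ x ∈ U, cylinder x N ⊆ U) (hne : U.Nonempty) {n : ℕ} (hn : N ≤ n) :
    g n ∈ closureOrders (holonomyGroup (action g) U : Set (U ≃ₜ U)) := by
  have H : ∀ i < N, e₁At g n i = 1 := fun i hi => Pi.mulSingle_eq_of_ne (by omega) _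
  refine ⟨_, restrictHomeo_smulHom_mem_closure hg hU H, orderOf_eq_prime ?_ ?_⟩
  · refine Homeomorph.ext fun x => Subtype.ext ?_
    rw [restrictHomeo_pow_apply, ← map_pow, ← orderOf_e₁At (g := g) n, pow_orderOf_eq_one, map_one]
    rfl
  · obtain ⟨x, hx⟩ := hne
    have hy := hU x hx (cylinder_anti x hn (update_mem_cylinder x n (Cosets.mk e₂)))
    intro h1
    have h2 := congrArg Subtype.val (DFunLike.congr_fun h1 ⟨_, hy⟩)
    exact e₁At_smul_update_ne x n h2

theorem mem_range_of_prime_mem_closureOrders [CompactSpace U] {q : ℕ} (hq : q.Prime)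
    (hqU : q ∈ closureOrders (holonomyGroup (action g) U : Set (U ≃ₜ U))) : q ∈ Set.range g := by
  obtain ⟨k, hk, rfl⟩ := hqU
  obtain ⟨x, hx⟩ : ∃ x : U, k x ≠ x := by
    by_contra! hfix
    exact hq.ne_one (by rw [(Homeomorph.ext hfix : k = 1), orderOf_one])
  obtain ⟨n, hn⟩ := Function.ne_iff.mp (Subtype.coe_injective.ne hx)
  obtain ⟨a, ha⟩ := exists_apply_eq_smul hk n
  have hpow : ∀ j (y : U), ((k ^ j) y : Space g) n = a ^ j • (y : Space g) n := by
    intro j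
    induction j with
    | zero => simp
    | succ j ih => intro y; rw [pow_succ, pow_succ, mul_smul, ← ha]; exact ih (k y)
  refine ⟨n, by_contra fun hne => hn ?_⟩
  rw [ha]
  refine smul_eq_of_pow_smul_eq ?_ (by rw [← hpow (orderOf k) x, pow_orderOf_eq_one]; rfl)
  rw [natCard_eq, Nat.card_zmod]
  exact ((Nat.coprime_primes hq (PrimeSeq.prime n)).mpr (Ne.symm hne)).pow_right 3

end

omit [PrimeSeq g] in
theorem eventually_mem_range_of_returnEquivalent {g₁ g₂ : ℕ → ℕ} [PrimeSeq g₁] [PrimeSeq g₂]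
    (hg₂ : Function.Injective g₂) (hre : ReturnEquivalent (action g₁) (action g₂)) :
    ∃ N, ∀ n ≥ N, g₂ n ∈ Set.range g₁ := by
  obtain ⟨U₁, U₂, hU₁, hU₂, hsub⟩ := hre.exists_closureOrders_subset
  have := isCompact_iff_compactSpace.mp hU₁.2.1.isClosed.isCompact
  have := isCompact_iff_compactSpace.mp hU₂.2.1.isClosed.isCompact
  obtain ⟨N, hN⟩ := exists_cylinder_subset_of_isClopen hU₂.2.1
  exact ⟨N, fun n hn => mem_range_of_prime_mem_closureOrders (PrimeSeq.prime n)
    (hsub (mem_closureOrders_holonomyGroup hg₂ hN hU₂.1 hn))⟩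

/-- The primes indexed by the codes of the initial segments of `r`: two such sequences share
infinitely many terms only if they come from the same `r`. -/
def primeCode (r : ℕ → Bool) (n : ℕ) : ℕ :=
  Nat.nth Nat.Prime (Encodable.encode ((List.range n).map r))

instance (r : ℕ → Bool) : PrimeSeq (primeCode r) := ⟨fun _ => Nat.prime_nth_prime _⟩

theorem primeCode_eq_primeCode {r₁ r₂ : ℕ → Bool} {m n : ℕ}
    (h : primeCode r₁ m = primeCode r₂ n) : m = n ∧ ∀ i < n, r₁ i = r₂ i := by
  have hl := Encodable.encode_injective (Nat.nth_injective Nat.infinite_setOfPred_prime h)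
  obtain rfl : m = n := by simpa using congrArg List.length hl
  exact ⟨rfl, fun i hi => List.map_inj_left.mp hl i (List.mem_range.mpr hi)⟩

theorem primeCode_injective (r : ℕ → Bool) : Function.Injective (primeCode r) :=
  fun _ _ h => (primeCode_eq_primeCode h).1

def cantorAction (r : ℕ → Bool) : HeisenbergCantorAction where
  X := Space (primeCode r)
  perf := PerfectSpace.univ_perfect _
  act := action (primeCode r)
  minimal := isMinimalAction_action (primeCode_injective r)
  equicontinuous := isEquicontinuousAction_action

theorem eq_of_returnEquivalent {r₁ r₂ : ℕ → Bool}
    (hre : ReturnEquivalent (cantorAction r₁).act (cantorAction r₂).act) : r₁ = r₂ := by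
  obtain ⟨N, hN⟩ := eventually_mem_range_of_returnEquivalent (primeCode_injective r₂) hre
  funext i
  obtain ⟨m, hm⟩ := hN (max N (i + 1)) (le_max_left _ _)
  exact (primeCode_eq_primeCode hm).2 i (by omega)

theorem cantorAction_injective : Function.Injective cantorAction :=
  fun r₁ _ h => eq_of_returnEquivalent (h ▸ ReturnEquivalent.refl (cantorAction r₁).act)

end HeisOdometer

instance : Uncountable (ℕ → Bool) :=
  Cardinal.aleph0_lt_mk_iff.mp (by simpa using Cardinal.aleph0_lt_continuum)

open HeisOdometer

/-- There is an uncountable family of minimal equicontinuous Cantor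
actions of the integer Heisenberg group, each topologically free and wild, no two distinct
members of which are return equivalent. -/
theorem exists_uncountable_family_of_wild_topFree_heisenberg_actions :
    ∃ A : Set HeisenbergCantorAction, ¬ A.Countable ∧
      (∀ B ∈ A, IsTopologicallyFree B.act ∧ ¬ IsStableAction B.act) ∧
      (∀ B₁ ∈ A, ∀ B₂ ∈ A, B₁ ≠ B₂ → ¬ ReturnEquivalent B₁.act B₂.act) := by
  refine ⟨Set.range cantorAction, fun hA => ?_, ?_, ?_⟩
  · exact not_countable (Set.countable_univ_iff.mp
      ((Set.mapsTo_range cantorAction _).countable_of_injOn cantorAction_injective.injOn hA))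
  · rintro _ ⟨r, rfl⟩
    exact ⟨isTopologicallyFree_action (primeCode_injective r),
      not_isStableAction_action (primeCode_injective r)⟩
  · rintro _ ⟨r₁, rfl⟩ _ ⟨r₂, rfl⟩ hne hre
    exact hne (congrArg cantorAction (eq_of_returnEquivalent hre))
end
end

section
/- Let (X, Γ, Φ) be a minimal equicontinuous Cantor action, x ∈ X, and { U_ℓ : ℓ ≥ 0 } an adapted neighborhood basis at x with stabilizers Γ_ℓ and normal cores C_ℓ = ⋂_{g ∈ Γ} g Γ_ℓ g⁻¹. Suppose the group chain { Γ_ℓ } is in normal form, i.e. for every ℓ the projection from the inverse limit D_∞ = lim← Γ_ℓ/C_ℓ to Γ_ℓ/C_ℓ is surjective. Then Π[D(Φ,x)] = LCM{ [Γ_ℓ : C_ℓ] : ℓ ≥ 0 }. -/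
noncomputable section

open Set Topology

/-! ### Group chains and their inverse limits -/

section GroupChains

variable {Γ : Type*} [Group Γ]

/-- The finite quotient `Γ_ℓ / C_ℓ` of an element of a group chain by its normal core. -/
def chainQuot (Γs : ℕ → Subgroup Γ) (ℓ : ℕ) : Type _ :=
  ↥(Γs ℓ) ⧸ ((Γs ℓ).normalCore.subgroupOf (Γs ℓ))

instance (Γs : ℕ → Subgroup Γ) (ℓ : ℕ) : Group (chainQuot Γs ℓ) :=
  inferInstanceAs (Group (↥(Γs ℓ) ⧸ ((Γs ℓ).normalCore.subgroupOf (Γs ℓ))))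

/-- The bonding homomorphism `Γ_{ℓ+1}/C_{ℓ+1} → Γ_ℓ/C_ℓ` induced by the inclusion
`Γ_{ℓ+1} ⊆ Γ_ℓ`. -/
def chainBond (Γs : ℕ → Subgroup Γ) (hle : ∀ ℓ, Γs (ℓ + 1) ≤ Γs ℓ) (ℓ : ℕ) :
    chainQuot Γs (ℓ + 1) →* chainQuot Γs ℓ :=
  QuotientGroup.map _ _ (Subgroup.inclusion (hle ℓ)) (by
    intro g hg
    simp only [Subgroup.mem_comap, Subgroup.mem_subgroupOf] at hg ⊢
    exact Subgroup.normalCore_mono (hle ℓ) hg)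

/-- The inverse limit `D_∞ = lim← Γ_ℓ/C_ℓ`, as the subgroup of the product consisting of
the sequences compatible with the bonding maps. -/
def chainDinf (Γs : ℕ → Subgroup Γ) (hle : ∀ ℓ, Γs (ℓ + 1) ≤ Γs ℓ) :
    Subgroup (∀ ℓ, chainQuot Γs ℓ) where
  carrier := { z | ∀ ℓ, chainBond Γs hle ℓ (z (ℓ + 1)) = z ℓ }
  one_mem' := fun ℓ => by simp only [Pi.one_apply, map_one]
  mul_mem' := by
    intro a b ha hb ℓ
    simp only [Pi.mul_apply, map_mul, ha ℓ, hb ℓ]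
  inv_mem' := by
    intro a ha ℓ
    simp only [Pi.inv_apply, map_inv, ha ℓ]

end GroupChains

/-- The stabilizer subgroups of a nested pair of adapted sets are nested. -/
theorem adaptedStabilizer_mono {X : Type*} [MetricSpace X] {Γ : Type*} [Group Γ]
    (Φ : Γ →* (X ≃ₜ X)) {U V : Set X} (hVU : V ⊆ U)
    (hU : IsAdaptedSet Φ U) (hV : IsAdaptedSet Φ V) :
    adaptedStabilizer Φ V ≤ adaptedStabilizer Φ U := by
  intro g hg
  have hgV : (Φ g) '' V = V := hg
  have hne : ((Φ g) '' U ∩ U).Nonempty := by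
    obtain ⟨v, hv⟩ := hV.1
    refine ⟨v, ?_, hVU hv⟩
    have hv' : v ∈ (Φ g) '' V := by rw [hgV]; exact hv
    exact Set.image_mono (f := ⇑(Φ g)) hVU hv'
  exact hU.2.2 g hne

/-!
Under minimality the translates of an adapted set `U_ℓ` partition `X` into finitely many clopen
blocks. Every element of `G(Φ)` permutes these blocks (it is uniformly close to some `Φ g`),
giving a homomorphism `G(Φ) → Perm(blocks)` whose open kernel `K_ℓ` meets `Φ(Γ)` in the normal
core `C_ℓ`; so `[Γ_ℓ : C_ℓ]` is the order of the image of `Γ_ℓ`. By equicontinuity the blocks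
shrink to points, so the `K_ℓ` form a neighbourhood basis of the identity, and a sequence `g_j`
that is coherent modulo the cores `C_j` has `Φ(g_j)` converging uniformly, to an element of
`G(Φ)` fixing `x`. Normal form provides such a sequence through any `g ∈ Γ_ℓ`, so `D(Φ,x)` and
`Γ_ℓ` have the same image, `|D(Φ,x) / (K_ℓ ∩ D(Φ,x))| = [Γ_ℓ : C_ℓ]`, and the two LCMs agree.
-/

namespace SteinitzNum

theorem lcmSet_apply_le_of_forall_dvd {S T : Set ℕ} (h : ∀ s ∈ S, ∃ t ∈ T, t ≠ 0 ∧ s ∣ t)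
    (p : Nat.Primes) : lcmSet S p ≤ lcmSet T p := by
  refine iSup₂_le fun s hs => ?_
  obtain ⟨t, ht, ht0, hst⟩ := h s hs
  have hs0 : s ≠ 0 := ne_zero_of_dvd_ne_zero ht0 hst
  refine le_iSup₂_of_le t ht ?_
  exact_mod_cast (Nat.factorization_le_iff_dvd hs0 ht0).2 hst (p : ℕ)

theorem lcmSet_eq_of_forall_dvd {S T : Set ℕ} (hST : ∀ s ∈ S, ∃ t ∈ T, t ≠ 0 ∧ s ∣ t)
    (hTS : ∀ t ∈ T, ∃ s ∈ S, s ≠ 0 ∧ t ∣ s) : lcmSet S = lcmSet T :=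
  funext fun p =>
    le_antisymm (lcmSet_apply_le_of_forall_dvd hST p) (lcmSet_apply_le_of_forall_dvd hTS p)

end SteinitzNum

theorem steinitzOrderOfSubgroup_eq_lcmSet_range {G : Type*} [Group G] [TopologicalSpace G]
    {ι : Type*} (D : Subgroup G) (K : ι → Subgroup G) (hnormal : ∀ i, (K i).Normal)
    (hopen : ∀ i, IsOpen (K i : Set G))
    (hbasis : ∀ N : Subgroup G, N.Normal → IsOpen (N : Set G) → ∃ i, K i ≤ N)
    (hfin : ∀ i, (K i).relIndex D ≠ 0) :
    steinitzOrderOfSubgroup D = SteinitzNum.lcmSet (Set.range fun i => (K i).relIndex D) := by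
  refine SteinitzNum.lcmSet_eq_of_forall_dvd ?_ ?_
  · rintro _ ⟨N, hN, hNopen, rfl⟩
    obtain ⟨i, hi⟩ := hbasis N hN hNopen
    exact ⟨_, ⟨i, rfl⟩, hfin i, Subgroup.relIndex_dvd_of_le_left D hi⟩
  · rintro _ ⟨i, rfl⟩
    exact ⟨_, ⟨K i, hnormal i, hopen i, rfl⟩, hfin i, dvd_rfl⟩

namespace Homeomorph

variable {Y : Type*} [MetricSpace Y] [CompactSpace Y]

theorem dist_mul_right_le (f g h : Y ≃ₜ Y) : dist (f * h) (g * h) ≤ dist f g := by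
  rw [dist_eq_contMap]
  exact (ContinuousMap.dist_le dist_nonneg).2 fun y => dist_apply_le f g (h y)

theorem dist_mul_right (f g h : Y ≃ₜ Y) : dist (f * h) (g * h) = dist f g :=
  le_antisymm (dist_mul_right_le f g h)
    (by simpa only [mul_inv_cancel_right] using dist_mul_right_le (f * h) (g * h) h⁻¹)

theorem dist_eq_dist_mul_inv_one (f g : Y ≃ₜ Y) : dist f g = dist (f * g⁻¹) 1 := by
  simpa only [inv_mul_cancel_right, one_mul] using dist_mul_right (f * g⁻¹) 1 g

theorem continuous_apply (y : Y) : Continuous fun f : Y ≃ₜ Y => f y :=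
  (LipschitzWith.of_dist_le_mul (K := 1) fun f g => by
    simpa only [NNReal.coe_one, one_mul] using dist_apply_le f g y).continuous

theorem isometry_coe_continuousMap : Isometry fun f : Y ≃ₜ Y => (f : C(Y, Y)) :=
  Isometry.of_dist_eq fun _ _ => rfl

theorem exists_tendsto_of_cauchySeq {ι : Type*} [SemilatticeSup ι] [Nonempty ι]
    {f : ι → Y ≃ₜ Y} (hf : CauchySeq f) (hf' : CauchySeq fun n => (f n)⁻¹) :
    ∃ h : Y ≃ₜ Y, Filter.Tendsto f Filter.atTop (𝓝 h) := by
  have hiso := isometry_coe_continuousMap (Y := Y)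
  obtain ⟨F, hF⟩ := cauchySeq_tendsto_of_complete (hiso.uniformContinuous.comp_cauchySeq hf)
  obtain ⟨G, hG⟩ := cauchySeq_tendsto_of_complete (hiso.uniformContinuous.comp_cauchySeq hf')
  have hFG : F.comp G = ContinuousMap.id Y := by
    refine tendsto_nhds_unique (hF.compCM hG) ?_
    refine tendsto_const_nhds.congr fun n => ?_
    ext y
    exact ((f n).apply_symm_apply y).symm
  have hGF : G.comp F = ContinuousMap.id Y := by
    refine tendsto_nhds_unique (hG.compCM hF) ?_
    refine tendsto_const_nhds.congr fun n => ?_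
    ext y
    exact ((f n).symm_apply_apply y).symm
  refine ⟨⟨⟨F, G, fun y => congr($hGF y), fun y => congr($hFG y)⟩, F.continuous, G.continuous⟩,
    ?_⟩
  exact hiso.isUniformInducing.isInducing.tendsto_nhds_iff.2 hF

end Homeomorph

theorem inv_mul_mem_of_forall_inv_mul_succ_mem {G : Type*} [Group G] {H : ℕ → Subgroup G}
    (hH : Antitone H) {a : ℕ → G} (ha : ∀ j, (a j)⁻¹ * a (j + 1) ∈ H j) {j k : ℕ}
    (hjk : j ≤ k) : (a j)⁻¹ * a k ∈ H j := by
  induction k, hjk using Nat.le_induction with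
  | base => simp
  | succ k hjk ih => simpa [mul_assoc] using (H j).mul_mem ih (hH hjk (ha k))

section GroupChains

variable {Γ : Type*} [Group Γ] {Γs : ℕ → Subgroup Γ}

theorem chainQuot_mk_eq_mk_iff {ℓ : ℕ} {a b : Γs ℓ} :
    (QuotientGroup.mk a : chainQuot Γs ℓ) = QuotientGroup.mk b ↔
      (a : Γ)⁻¹ * b ∈ (Γs ℓ).normalCore := by
  rw [QuotientGroup.eq, Subgroup.mem_subgroupOf, Subgroup.coe_mul, Subgroup.coe_inv]

theorem exists_seq_of_map_chainDinf_eq_top (hle : ∀ ℓ, Γs (ℓ + 1) ≤ Γs ℓ) {L : ℕ}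
    (hnf : (chainDinf Γs hle).map (Pi.evalMonoidHom (chainQuot Γs) L) = ⊤)
    {g : Γ} (hg : g ∈ Γs L) :
    ∃ gs : ℕ → Γ, (∀ j, gs j ∈ Γs j) ∧
      (∀ j k, j ≤ k → (gs j)⁻¹ * gs k ∈ (Γs j).normalCore) ∧
      (gs L)⁻¹ * g ∈ (Γs L).normalCore := by
  obtain ⟨z, hz, hzL⟩ := Subgroup.mem_map.1 (hnf ▸ Subgroup.mem_top
    (QuotientGroup.mk ⟨g, hg⟩ : chainQuot Γs L))
  choose w hw using fun j => QuotientGroup.mk_surjective (z j)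
  have hCanti : Antitone fun j => (Γs j).normalCore :=
    antitone_nat_of_succ_le fun j => Subgroup.normalCore_mono (hle j)
  have hsucc : ∀ j, (w j : Γ)⁻¹ * w (j + 1) ∈ (Γs j).normalCore := fun j => by
    refine (chainQuot_mk_eq_mk_iff (b := Subgroup.inclusion (hle j) (w (j + 1)))).1 ?_
    rw [hw j, ← hz j, ← hw (j + 1)]
    rfl
  refine ⟨fun j => w j, fun j => (w j).2,
    fun j k hjk => inv_mul_mem_of_forall_inv_mul_succ_mem hCanti hsucc hjk, ?_⟩
  exact chainQuot_mk_eq_mk_iff.1 ((hw L).trans hzL)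

end GroupChains

section Blocks

variable {X : Type*} [MetricSpace X] {Γ : Type*} [Group Γ] {Φ : Γ →* (X ≃ₜ X)} {V : Set X}

theorem apply_mem_iff_of_mem_adaptedStabilizer {g : Γ} (hg : g ∈ adaptedStabilizer Φ V)
    {y : X} : Φ g y ∈ V ↔ y ∈ V := by
  conv_lhs => rw [← show Φ g '' V = V from hg]
  exact (Φ g).injective.mem_set_image

theorem IsAdaptedSet.mem_adaptedStabilizer (hV : IsAdaptedSet Φ V) {g : Γ} {a : X}
    (ha : a ∈ V) (hga : Φ g a ∈ V) : g ∈ adaptedStabilizer Φ V :=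
  hV.2.2 g ⟨Φ g a, Set.mem_image_of_mem _ ha, hga⟩

theorem IsAdaptedSet.apply_mem_iff (hV : IsAdaptedSet Φ V) {a b : X} (ha : a ∈ V)
    (hb : b ∈ V) (g : Γ) : Φ g a ∈ V ↔ Φ g b ∈ V :=
  ⟨fun h => (apply_mem_iff_of_mem_adaptedStabilizer (hV.mem_adaptedStabilizer ha h)).2 hb,
    fun h => (apply_mem_iff_of_mem_adaptedStabilizer (hV.mem_adaptedStabilizer hb h)).2 ha⟩

theorem exists_apply_mem (hmin : IsMinimalAction Φ) (hV : IsAdaptedSet Φ V) (y : X) :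
    ∃ k : Γ, Φ k y ∈ V := by
  obtain ⟨_, ⟨k, rfl⟩, hk⟩ := (hmin y).exists_mem_open hV.2.1.isOpen hV.1
  exact ⟨k, hk⟩

variable (Φ V) in
/-- When `V` is adapted and the action minimal, the translates of `V` partition `X`, and this
says that `y` and `z` lie in the same one. -/
def SameBlock (y z : X) : Prop :=
  ∀ g : Γ, Φ g y ∈ V ↔ Φ g z ∈ V

theorem SameBlock.symm {y z : X} (h : SameBlock Φ V y z) : SameBlock Φ V z y :=
  fun g => (h g).symm

theorem SameBlock.trans {y z w : X} (h₁ : SameBlock Φ V y z) (h₂ : SameBlock Φ V z w) :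
    SameBlock Φ V y w :=
  fun g => (h₁ g).trans (h₂ g)

theorem SameBlock.apply {y z : X} (h : SameBlock Φ V y z) (k : Γ) :
    SameBlock Φ V (Φ k y) (Φ k z) := fun g => by
  simpa only [map_mul, Homeomorph.mul_apply'] using h (g * k)

theorem sameBlock_iff_apply_mem (hV : IsAdaptedSet Φ V) {y z : X} {k : Γ} (hk : Φ k z ∈ V) :
    SameBlock Φ V y z ↔ Φ k y ∈ V := by
  refine ⟨fun h => (h k).2 hk, fun hy g => ?_⟩
  simpa only [map_mul, map_inv, Homeomorph.mul_apply', Homeomorph.inv_eq_symm,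
    Homeomorph.symm_apply_apply] using hV.apply_mem_iff hy hk (g * k⁻¹)

theorem isOpen_setOf_sameBlock (hmin : IsMinimalAction Φ) (hV : IsAdaptedSet Φ V) (z : X) :
    IsOpen {y | SameBlock Φ V y z} := by
  obtain ⟨k, hk⟩ := exists_apply_mem hmin hV z
  have : {y | SameBlock Φ V y z} = Φ k ⁻¹' V := Set.ext fun y => sameBlock_iff_apply_mem hV hk
  exact this ▸ hV.2.1.isOpen.preimage (Φ k).continuous

theorem exists_sameBlock_of_dist_lt [CompactSpace X] (hmin : IsMinimalAction Φ)
    (hV : IsAdaptedSet Φ V) : ∃ δ > 0, ∀ y z : X, dist y z < δ → SameBlock Φ V y z := by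
  obtain ⟨δ, hδ, hball⟩ := lebesgue_number_lemma_of_metric isCompact_univ
    (isOpen_setOf_sameBlock hmin hV) fun y _ => Set.mem_iUnion.2 ⟨y, fun _ => Iff.rfl⟩
  refine ⟨δ, hδ, fun y z hyz => ?_⟩
  obtain ⟨w, hw⟩ := hball y (Set.mem_univ y)
  exact (hw (Metric.mem_ball_self hδ)).trans (hw (Metric.mem_ball'.2 hyz)).symm

theorem mem_normalCore_iff_sameBlock (hV : IsAdaptedSet Φ V) {g : Γ} :
    g ∈ (adaptedStabilizer Φ V).normalCore ↔ ∀ y, SameBlock Φ V (Φ g y) y := by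
  refine ⟨fun hg y k => ?_, fun h k => ?_⟩
  · have hconj : Φ k (Φ g y) = Φ (k * g * k⁻¹) (Φ k y) := by
      simp only [map_mul, map_inv, Homeomorph.mul_apply', Homeomorph.inv_eq_symm,
        Homeomorph.symm_apply_apply]
    rw [hconj]
    exact apply_mem_iff_of_mem_adaptedStabilizer (hg k)
  · obtain ⟨v, hv⟩ := hV.1
    refine hV.mem_adaptedStabilizer hv ?_
    have := (h (Φ k⁻¹ v) k).2
    simp only [map_mul, map_inv, Homeomorph.mul_apply', Homeomorph.inv_eq_symm,
      Homeomorph.apply_symm_apply] at this ⊢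
    exact this hv

variable (Φ V) in
def blockSetoid : Setoid X :=
  ⟨SameBlock Φ V, ⟨fun _ _ => Iff.rfl, SameBlock.symm, SameBlock.trans⟩⟩

variable (Φ V) in
abbrev Blocks : Type _ := Quotient (blockSetoid Φ V)

theorem finite_blocks [CompactSpace X] (hmin : IsMinimalAction Φ) (hV : IsAdaptedSet Φ V) :
    Finite (Blocks Φ V) := by
  obtain ⟨δ, hδ, hclose⟩ := exists_sameBlock_of_dist_lt hmin hV
  obtain ⟨t, -, ht, hcover⟩ := finite_cover_balls_of_compact (isCompact_univ (X := X)) hδ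
  refine Set.finite_univ_iff.1 ((ht.image (Quotient.mk _)).subset ?_)
  rintro ⟨y⟩ -
  obtain ⟨c, hc, hyc⟩ := Set.mem_iUnion₂.1 (hcover (Set.mem_univ y))
  exact ⟨c, hc, Quotient.sound (hclose c y (Metric.mem_ball'.1 hyc))⟩

end Blocks

section ProfiniteClosure

variable {X : Type*} [MetricSpace X] [CompactSpace X] {Γ : Type*} [Group Γ]
  {Φ : Γ →* (X ≃ₜ X)} {V : Set X}

theorem exists_dist_lt_of_mem_profiniteClosure {f : X ≃ₜ X} (hf : f ∈ profiniteClosure Φ)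
    {ε : ℝ} (hε : 0 < ε) : ∃ g : Γ, dist f (Φ g) < ε := by
  obtain ⟨_, ⟨g, rfl⟩, hg⟩ := Metric.mem_closure_iff.1 hf ε hε
  exact ⟨g, hg⟩

theorem SameBlock.apply_of_mem_profiniteClosure (hmin : IsMinimalAction Φ)
    (hV : IsAdaptedSet Φ V) {f : X ≃ₜ X} (hf : f ∈ profiniteClosure Φ) {y z : X}
    (h : SameBlock Φ V y z) : SameBlock Φ V (f y) (f z) := by
  obtain ⟨δ, hδ, hclose⟩ := exists_sameBlock_of_dist_lt hmin hV
  obtain ⟨g, hg⟩ := exists_dist_lt_of_mem_profiniteClosure hf hδ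
  have hnear : ∀ w, SameBlock Φ V (f w) (Φ g w) := fun w =>
    hclose _ _ ((Homeomorph.dist_apply_le f (Φ g) w).trans_lt hg)
  exact (hnear y).trans ((h.apply g).trans (hnear z).symm)

variable (Φ) in
def toProfiniteClosure : Γ →* profiniteClosure Φ :=
  Φ.codRestrict _ fun g => Φ.range.le_topologicalClosure ⟨g, rfl⟩

def blockHom (hmin : IsMinimalAction Φ) (hV : IsAdaptedSet Φ V) :
    profiniteClosure Φ →* Equiv.Perm (Blocks Φ V) where
  toFun f := Quotient.congr (f : X ≃ₜ X).toEquiv fun _ _ =>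
    ⟨SameBlock.apply_of_mem_profiniteClosure hmin hV f.2, fun h => by
      show SameBlock Φ V _ _
      simpa using h.apply_of_mem_profiniteClosure hmin hV (f⁻¹).2⟩
  map_one' := Equiv.ext fun q => Quotient.inductionOn q fun _ => rfl
  map_mul' _ _ := Equiv.ext fun q => Quotient.inductionOn q fun _ => rfl

variable (hmin : IsMinimalAction Φ) (hV : IsAdaptedSet Φ V)

theorem blockHom_mk (f : profiniteClosure Φ) (y : X) :
    blockHom hmin hV f ⟦y⟧ = ⟦(f : X ≃ₜ X) y⟧ := rfl

theorem mem_ker_blockHom {f : profiniteClosure Φ} :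
    f ∈ (blockHom hmin hV).ker ↔ ∀ y, SameBlock Φ V ((f : X ≃ₜ X) y) y := by
  refine MonoidHom.mem_ker.trans ⟨fun h y => Quotient.exact (congr($h ⟦y⟧)), fun h => ?_⟩
  exact Equiv.ext fun q => Quotient.inductionOn q fun y => Quotient.sound (h y)

theorem exists_blockHom_eq_of_dist_lt :
    ∃ δ > 0, ∀ f f' : profiniteClosure Φ, dist f f' < δ →
      blockHom hmin hV f = blockHom hmin hV f' := by
  obtain ⟨δ, hδ, hclose⟩ := exists_sameBlock_of_dist_lt hmin hV
  refine ⟨δ, hδ, fun f f' hff' => Equiv.ext fun q => Quotient.inductionOn q fun y => ?_⟩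
  exact Quotient.sound (hclose _ _ ((Homeomorph.dist_apply_le _ _ y).trans_lt hff'))

theorem isOpen_ker_blockHom : IsOpen ((blockHom hmin hV).ker : Set (profiniteClosure Φ)) := by
  obtain ⟨δ, hδ, hconst⟩ := exists_blockHom_eq_of_dist_lt hmin hV
  refine Metric.isOpen_iff.2 fun f hf => ⟨δ, hδ, fun f' hf' => ?_⟩
  rw [SetLike.mem_coe, MonoidHom.mem_ker, hconst f' f hf']
  exact hf

theorem relIndex_ker_blockHom_ne_zero (D : Subgroup (profiniteClosure Φ)) :
    (blockHom hmin hV).ker.relIndex D ≠ 0 := by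
  have := finite_blocks hmin hV
  rw [Subgroup.relIndex_ker]
  exact Nat.card_pos.ne'

theorem ker_blockHom_comp_toProfiniteClosure :
    ((blockHom hmin hV).comp (toProfiniteClosure Φ)).ker = (adaptedStabilizer Φ V).normalCore := by
  ext g
  exact (mem_ker_blockHom hmin hV).trans (mem_normalCore_iff_sameBlock hV).symm

end ProfiniteClosure

section NeighborhoodBasis

variable {X : Type*} [MetricSpace X] [CompactSpace X] {Γ : Type*} [Group Γ]
  {Φ : Γ →* (X ≃ₜ X)} {x : X} {U : ℕ → Set X}

theorem exists_forall_ge_subset_ball (hclosed : ∀ ℓ, IsClosed (U ℓ)) (hanti : Antitone U)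
    (hinter : ⋂ ℓ, U ℓ = {x}) {r : ℝ} (hr : 0 < r) :
    ∃ J, ∀ j ≥ J, U j ⊆ Metric.ball x r := by
  obtain ⟨J, hJ⟩ := exists_subset_nhds_of_isCompact' hanti.directed_ge
    (fun ℓ => (hclosed ℓ).isCompact) hclosed (U := Metric.ball x r) fun y hy => by
      rw [hinter, Set.mem_singleton_iff] at hy
      exact hy ▸ Metric.ball_mem_nhds x hr
  exact ⟨J, fun j hj => (hanti hj).trans hJ⟩

theorem exists_forall_ge_sameBlock_dist_lt (hmin : IsMinimalAction Φ)
    (heqc : IsEquicontinuousAction Φ) (hadapt : ∀ ℓ, IsAdaptedSet Φ (U ℓ)) (hanti : Antitone U)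
    (hinter : ⋂ ℓ, U ℓ = {x}) {ε : ℝ} (hε : 0 < ε) :
    ∃ J, ∀ j ≥ J, ∀ y z, SameBlock Φ (U j) y z → dist y z < ε := by
  obtain ⟨δ, hδ, hequi⟩ := heqc ε hε
  obtain ⟨J, hJ⟩ := exists_forall_ge_subset_ball (fun ℓ => (hadapt ℓ).2.1.isClosed) hanti
    hinter (half_pos hδ)
  refine ⟨J, fun j hj y z hyz => ?_⟩
  -- Move the block of `y` and `z` into `U j ⊆ ball x (δ / 2)`, then pull back by equicontinuity.
  obtain ⟨k, hk⟩ := exists_apply_mem hmin (hadapt j) y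
  have hky := hJ j hj hk
  have hkz := hJ j hj ((hyz k).1 hk)
  have hclose : dist (Φ k y) (Φ k z) < δ := by
    linarith [dist_triangle_right (Φ k y) (Φ k z) x, Metric.mem_ball.1 hky,
      Metric.mem_ball.1 hkz]
  simpa only [map_inv, Homeomorph.inv_eq_symm, Homeomorph.symm_apply_apply] using
    hequi _ _ hclose k⁻¹

theorem exists_forall_ge_dist_one_lt (hmin : IsMinimalAction Φ)
    (heqc : IsEquicontinuousAction Φ) (hadapt : ∀ ℓ, IsAdaptedSet Φ (U ℓ)) (hanti : Antitone U)
    (hinter : ⋂ ℓ, U ℓ = {x}) {ε : ℝ} (hε : 0 < ε) :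
    ∃ J, ∀ j ≥ J, ∀ f : X ≃ₜ X, (∀ y, SameBlock Φ (U j) (f y) y) → dist f 1 < ε := by
  obtain ⟨J, hJ⟩ := exists_forall_ge_sameBlock_dist_lt hmin heqc hadapt hanti hinter hε
  exact ⟨J, fun j hj f hf => (Homeomorph.dist_lt_iff' _ _ hε).2 fun y => hJ j hj _ _ (hf y)⟩

theorem exists_ker_blockHom_le (hmin : IsMinimalAction Φ)
    (heqc : IsEquicontinuousAction Φ) (hadapt : ∀ ℓ, IsAdaptedSet Φ (U ℓ)) (hanti : Antitone U)
    (hinter : ⋂ ℓ, U ℓ = {x}) {N : Subgroup (profiniteClosure Φ)}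
    (hN : IsOpen (N : Set (profiniteClosure Φ))) :
    ∃ L, (blockHom hmin (hadapt L)).ker ≤ N := by
  obtain ⟨ε, hε, hball⟩ := Metric.isOpen_iff.1 hN 1 N.one_mem
  obtain ⟨J, hJ⟩ := exists_forall_ge_dist_one_lt hmin heqc hadapt hanti hinter hε
  exact ⟨J, fun f hf => hball (hJ J le_rfl _ ((mem_ker_blockHom hmin (hadapt J)).1 hf))⟩

theorem exists_forall_ge_normalCore_dist_one_lt (hmin : IsMinimalAction Φ)
    (heqc : IsEquicontinuousAction Φ) (hadapt : ∀ ℓ, IsAdaptedSet Φ (U ℓ)) (hanti : Antitone U)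
    (hinter : ⋂ ℓ, U ℓ = {x}) {ε : ℝ} (hε : 0 < ε) :
    ∃ J, ∀ j ≥ J, ∀ c ∈ (adaptedStabilizer Φ (U j)).normalCore, dist (Φ c) 1 < ε := by
  obtain ⟨J, hJ⟩ := exists_forall_ge_dist_one_lt hmin heqc hadapt hanti hinter hε
  exact ⟨J, fun j hj c hc => hJ j hj _ ((mem_normalCore_iff_sameBlock (hadapt j)).1 hc)⟩

end NeighborhoodBasis

theorem exists_tendsto_of_inv_mul_mem {X : Type*} [MetricSpace X] [CompactSpace X]
    {Γ : Type*} [Group Γ] {Φ : Γ →* (X ≃ₜ X)} {N : ℕ → Subgroup Γ} (hN : ∀ j, (N j).Normal)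
    (hsmall : ∀ ε > 0, ∃ J, ∀ j ≥ J, ∀ c ∈ N j, dist (Φ c) 1 < ε) {s : ℕ → Γ}
    (hs : ∀ j k, j ≤ k → (s j)⁻¹ * s k ∈ N j) :
    ∃ d : X ≃ₜ X, Filter.Tendsto (fun n => Φ (s n)) Filter.atTop (𝓝 d) := by
  -- The uniform metric is right-invariant, and normality of `N J` puts both `s n * (s J)⁻¹`
  -- and `(s n)⁻¹ * s J` in `N J`.
  have hclose : ∀ ε > 0, ∃ J, ∀ n ≥ J,
      dist (Φ (s n)) (Φ (s J)) < ε ∧ dist (Φ (s n))⁻¹ (Φ (s J))⁻¹ < ε := by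
    intro ε hε
    obtain ⟨J, hJ⟩ := hsmall ε hε
    refine ⟨J, fun n hn => ⟨?_, ?_⟩⟩
    · rw [Homeomorph.dist_eq_dist_mul_inv_one, ← map_inv, ← map_mul]
      refine hJ J le_rfl _ ?_
      simpa [mul_assoc] using (hN J).conj_mem _ (hs J n hn) (s J)
    · rw [Homeomorph.dist_eq_dist_mul_inv_one, inv_inv, ← map_inv, ← map_mul]
      exact hJ J le_rfl _ (by simpa using (N J).inv_mem (hs J n hn))
  exact Homeomorph.exists_tendsto_of_cauchySeq
    (Metric.cauchySeq_iff'.2 fun ε hε => (hclose ε hε).imp fun _ h n hn => (h n hn).1)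
    (Metric.cauchySeq_iff'.2 fun ε hε => (hclose ε hε).imp fun _ h n hn => (h n hn).2)

section Discriminant

variable {X : Type*} [MetricSpace X] [CompactSpace X] {Γ : Type*} [Group Γ]
  {Φ : Γ →* (X ≃ₜ X)} {x : X}

theorem map_blockHom_discriminant_le {V : Set X} (hmin : IsMinimalAction Φ)
    (hV : IsAdaptedSet Φ V) (hxV : x ∈ V) :
    (discriminant Φ x).map (blockHom hmin hV) ≤
      (adaptedStabilizer Φ V).map ((blockHom hmin hV).comp (toProfiniteClosure Φ)) := by
  rintro _ ⟨d, hdx, rfl⟩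
  obtain ⟨δ, hδ, hconst⟩ := exists_blockHom_eq_of_dist_lt hmin hV
  obtain ⟨g, hg⟩ := exists_dist_lt_of_mem_profiniteClosure d.2 hδ
  have hdg : blockHom hmin hV d = blockHom hmin hV (toProfiniteClosure Φ g) := hconst _ _ hg
  have hgx : SameBlock Φ V x (Φ g x) := by
    have := congr($hdg ⟦x⟧)
    rw [blockHom_mk, blockHom_mk, show (d : X ≃ₜ X) x = x from hdx] at this
    exact Quotient.exact this
  have hgxV : Φ g x ∈ V := by
    have := (hgx 1).1
    simp only [map_one, Homeomorph.one_apply'] at this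
    exact this hxV
  exact ⟨g, hV.mem_adaptedStabilizer hxV hgxV, hdg.symm⟩

variable {U : ℕ → Set X}

theorem apply_eq_of_tendsto (hadapt : ∀ ℓ, IsAdaptedSet Φ (U ℓ)) (hx : ∀ ℓ, x ∈ U ℓ)
    (hanti : Antitone U) (hinter : ⋂ ℓ, U ℓ = {x}) {s : ℕ → Γ}
    (hs : ∀ n, s n ∈ adaptedStabilizer Φ (U n)) {d : X ≃ₜ X}
    (hd : Filter.Tendsto (fun n => Φ (s n)) Filter.atTop (𝓝 d)) : d x = x := by
  refine tendsto_nhds_unique (((Homeomorph.continuous_apply x).tendsto d).comp hd)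
    (Metric.tendsto_atTop.2 fun r hr => ?_)
  obtain ⟨J, hJ⟩ := exists_forall_ge_subset_ball (fun ℓ => (hadapt ℓ).2.1.isClosed) hanti
    hinter hr
  exact ⟨J, fun n hn => hJ n hn ((apply_mem_iff_of_mem_adaptedStabilizer (hs n)).2 (hx n))⟩

theorem le_map_blockHom_discriminant (hmin : IsMinimalAction Φ)
    (heqc : IsEquicontinuousAction Φ) (hadapt : ∀ ℓ, IsAdaptedSet Φ (U ℓ)) (hx : ∀ ℓ, x ∈ U ℓ)
    (hanti : Antitone U) (hinter : ⋂ ℓ, U ℓ = {x})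
    (hle : ∀ ℓ, adaptedStabilizer Φ (U (ℓ + 1)) ≤ adaptedStabilizer Φ (U ℓ)) {L : ℕ}
    (hnf : (chainDinf (fun j => adaptedStabilizer Φ (U j)) hle).map
        (Pi.evalMonoidHom (chainQuot fun j => adaptedStabilizer Φ (U j)) L) = ⊤) :
    (adaptedStabilizer Φ (U L)).map ((blockHom hmin (hadapt L)).comp (toProfiniteClosure Φ)) ≤
      (discriminant Φ x).map (blockHom hmin (hadapt L)) := by
  rintro _ ⟨g, hg, rfl⟩
  obtain ⟨gs, hgs, hcoh, hgL⟩ := exists_seq_of_map_chainDinf_eq_top hle hnf hg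
  obtain ⟨d, hd⟩ := exists_tendsto_of_inv_mul_mem (fun _ => Subgroup.normalCore_normal _)
    (fun _ hε => exists_forall_ge_normalCore_dist_one_lt hmin heqc hadapt hanti hinter hε) hcoh
  have hdG : d ∈ profiniteClosure Φ := by
    rw [← SetLike.mem_coe, profiniteClosure, Subgroup.topologicalClosure_coe]
    exact mem_closure_of_tendsto hd (Filter.Eventually.of_forall fun n => ⟨gs n, rfl⟩)
  obtain ⟨δ, hδ, hconst⟩ := exists_blockHom_eq_of_dist_lt hmin (hadapt L)
  obtain ⟨n, hnL, hn⟩ :=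
    ((Filter.eventually_ge_atTop L).and (Metric.tendsto_nhds.1 hd δ hδ)).exists
  refine ⟨⟨d, hdG⟩, apply_eq_of_tendsto hadapt hx hanti hinter hgs hd, ?_⟩
  have hcore : g⁻¹ * gs n ∈ (adaptedStabilizer Φ (U L)).normalCore := by
    simpa [mul_assoc] using Subgroup.mul_mem _ (Subgroup.inv_mem _ hgL) (hcoh L n hnL)
  calc blockHom hmin (hadapt L) ⟨d, hdG⟩
      = blockHom hmin (hadapt L) (toProfiniteClosure Φ (gs n)) :=
        hconst _ _ ((dist_comm _ _).trans_lt hn)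
    _ = ((blockHom hmin (hadapt L)).comp (toProfiniteClosure Φ)) g := by
      rw [← MonoidHom.comp_apply, MonoidHom.eq_iff, ker_blockHom_comp_toProfiniteClosure]
      exact hcore

theorem relIndex_ker_blockHom_discriminant (hmin : IsMinimalAction Φ)
    (heqc : IsEquicontinuousAction Φ) (hadapt : ∀ ℓ, IsAdaptedSet Φ (U ℓ)) (hx : ∀ ℓ, x ∈ U ℓ)
    (hanti : Antitone U) (hinter : ⋂ ℓ, U ℓ = {x})
    (hle : ∀ ℓ, adaptedStabilizer Φ (U (ℓ + 1)) ≤ adaptedStabilizer Φ (U ℓ)) {L : ℕ}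
    (hnf : (chainDinf (fun j => adaptedStabilizer Φ (U j)) hle).map
        (Pi.evalMonoidHom (chainQuot fun j => adaptedStabilizer Φ (U j)) L) = ⊤) :
    (blockHom hmin (hadapt L)).ker.relIndex (discriminant Φ x) =
      (adaptedStabilizer Φ (U L)).normalCore.relIndex (adaptedStabilizer Φ (U L)) := by
  rw [Subgroup.relIndex_ker, le_antisymm (map_blockHom_discriminant_le hmin (hadapt L) (hx L))
    (le_map_blockHom_discriminant hmin heqc hadapt hx hanti hinter hle hnf),
    ← Subgroup.relIndex_ker, ker_blockHom_comp_toProfiniteClosure]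

end Discriminant

theorem steinitzOrderDisc_eq_of_normalForm_groupChain_general
    {X : Type*} [MetricSpace X] [CompactSpace X]
    {Γ : Type*} [Group Γ] (Φ : Γ →* (X ≃ₜ X))
    (hmin : IsMinimalAction Φ) (heqc : IsEquicontinuousAction Φ)
    (x : X) (U : ℕ → Set X)
    (hadapt : ∀ ℓ, IsAdaptedSet Φ (U ℓ)) (hx : ∀ ℓ, x ∈ U ℓ)
    (hproper : ∀ ℓ, U (ℓ + 1) ⊂ U ℓ) (hinter : (⋂ ℓ, U ℓ) = {x})
    (hnormalform : ∀ ℓ,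
      (chainDinf (fun j => adaptedStabilizer Φ (U j))
          (fun j => adaptedStabilizer_mono Φ (hproper j).subset
            (hadapt j) (hadapt (j + 1)))).map
        (Pi.evalMonoidHom (chainQuot fun j => adaptedStabilizer Φ (U j)) ℓ) = ⊤) :
    steinitzOrderDisc Φ x =
      SteinitzNum.lcmSet (Set.range fun ℓ =>
        (((adaptedStabilizer Φ (U ℓ)).normalCore).subgroupOf
            (adaptedStabilizer Φ (U ℓ))).index) := by
  have hanti : Antitone U := antitone_nat_of_succ_le fun ℓ => (hproper ℓ).subset
  rw [steinitzOrderDisc, steinitzOrderOfSubgroup_eq_lcmSet_range (discriminant Φ x)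
    (fun L => (blockHom hmin (hadapt L)).ker) (fun _ => inferInstance)
    (fun L => isOpen_ker_blockHom hmin (hadapt L))
    (fun _ _ hN => exists_ker_blockHom_le hmin heqc hadapt hanti hinter hN)
    (fun L => relIndex_ker_blockHom_ne_zero hmin (hadapt L) _)]
  congr 2 with L
  exact relIndex_ker_blockHom_discriminant hmin heqc hadapt hx hanti hinter _ (hnormalform L)

/-- If the group chain of stabilizers of an adapted neighborhood basis
at `x` is in normal form (all projections from the inverse limit `D_∞ = lim← Γ_ℓ/C_ℓ` are
surjective), then `Π[D(Φ,x)] = LCM{[Γ_ℓ : C_ℓ]}`. -/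
theorem steinitzOrderDisc_eq_of_normalForm_groupChain
    {X : Type*} [MetricSpace X] [CompactSpace X] [Nonempty X] [TotallyDisconnectedSpace X]
    (hperf : Perfect (Set.univ : Set X))
    {Γ : Type*} [Group Γ] [Countable Γ] (Φ : Γ →* (X ≃ₜ X))
    (hmin : IsMinimalAction Φ) (heqc : IsEquicontinuousAction Φ)
    (x : X) (U : ℕ → Set X)
    (hadapt : ∀ ℓ, IsAdaptedSet Φ (U ℓ)) (hx : ∀ ℓ, x ∈ U ℓ)
    (hproper : ∀ ℓ, U (ℓ + 1) ⊂ U ℓ) (hinter : (⋂ ℓ, U ℓ) = {x})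
    (hnormalform : ∀ ℓ,
      (chainDinf (fun j => adaptedStabilizer Φ (U j))
          (fun j => adaptedStabilizer_mono Φ (hproper j).subset
            (hadapt j) (hadapt (j + 1)))).map
        (Pi.evalMonoidHom (chainQuot fun j => adaptedStabilizer Φ (U j)) ℓ) = ⊤) :
    steinitzOrderDisc Φ x =
      SteinitzNum.lcmSet (Set.range fun ℓ =>
        (((adaptedStabilizer Φ (U ℓ)).normalCore).subgroupOf
            (adaptedStabilizer Φ (U ℓ))).index) :=
  steinitzOrderDisc_eq_of_normalForm_groupChain_general Φ hmin heqc x U hadapt hx hproper hinter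
    hnormalform
end
end
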